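/- Let n ≥ 2 and let Q_{4n} = ⟨x, y : y^{2n} = 1, x² = yⁿ, xyx⁻¹ = y⁻¹⟩ be the generalized quaternion group of order 4n. Then the Laplacian spectrum of the non-commuting graph 𝒜_{Q_{4n}} is {0^1, (2n)^{2n − 3}, (4n − 4)^n, (4n − 2)^n}. -/

import Mathlib

open Polynomial

/-- The non-commuting graph of a group `G`: vertices are the non-central elements,
two vertices adjacent iff they do not commute. -/
def nonCommGraph (G : Type*) [Group G] : SimpleGraph {x : G // x ∉ Subgroup.center G} where
  Adj x y := ¬ Commute (x : G) (y : G)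
  symm := ⟨fun _ _ h hc => h hc.symm⟩
  loopless := ⟨fun _ h => h (Commute.refl _)⟩

/-- The Laplacian matrix of the non-commuting graph, over `ℝ`. -/
noncomputable def ncLap (G : Type*) [Group G] [Fintype G] :
    Matrix {x : G // x ∉ Subgroup.center G} {x : G // x ∉ Subgroup.center G} ℝ :=
  letI := Classical.decEq G
  letI : DecidablePred (fun x : G => x ∉ Subgroup.center G) := fun _ => Classical.dec _
  letI : DecidableRel (nonCommGraph G).Adj := fun _ _ => Classical.dec _
  (nonCommGraph G).lapMatrix ℝ

/-- The characteristic polynomial of the Laplacian matrix of the non-commuting graph. -/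
noncomputable def ncCharpoly (G : Type*) [Group G] [Fintype G] : Polynomial ℝ :=
  letI := Classical.decEq G
  letI : DecidablePred (fun x : G => x ∉ Subgroup.center G) := fun _ => Classical.dec _
  (ncLap G).charpoly

/-- The non-commuting graph of `G` is L-integral: every eigenvalue of its Laplacian
matrix is an integer. -/
def ncLIntegral (G : Type*) [Group G] [Fintype G] : Prop :=
  letI := Classical.decEq G
  letI : DecidablePred (fun x : G => x ∉ Subgroup.center G) := fun _ => Classical.dec _
  ∀ μ ∈ spectrum ℝ (ncLap G), ∃ k : ℤ, μ = (k : ℝ)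

/-! The non-commuting graph of `Q_{4n}` is complete multipartite: the non-central powers `a i`
form one part of size `2n - 2`, and each pair `{xa i, xa (i + n)}` is a part of size `2`.
For a complete multipartite graph on `N` vertices with `k` parts of sizes `c_i`, one has
`t • 1 - L = M + J` with `J` the all-ones matrix and `M` block diagonal with blocks
`(t - N + c_i) • 1 - J`, all of whose rows sum to `t - N`. The matrix determinant lemma turns
this into `det (t • 1 - L) = t (t - N)^(k-1) ∏ (t - N + c_i)^(c_i - 1)` for all but finitely
many `t`, which determines the characteristic polynomial. -/

open Finset Matrix

namespace Matrix

variable {m K : Type*} [Fintype m] [DecidableEq m] [Field K]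

theorem mul_det_add_all_ones_of_row_sum {A : Matrix m m K} {s : K} (hs : s ≠ 0)
    (hA : ∀ i, ∑ j, A i j = s) :
    s * (A + of fun _ _ => 1).det = (s + Fintype.card m) * A.det := by
  have hfactor : A + of (fun _ _ => 1) =
      A * (1 + replicateCol Unit (fun _ => s⁻¹) * replicateRow Unit (fun _ : m => (1 : K))) := by
    ext i j
    simp [Matrix.mul_apply, Matrix.one_apply, mul_add, sum_add_distrib, ← sum_mul, hA, hs]
  rw [hfactor, det_mul, det_one_add_replicateCol_mul_replicateRow]
  simp only [dotProduct, one_mul, sum_const, card_univ, nsmul_eq_mul]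
  field_simp

theorem det_smul_one_sub_all_ones [Nonempty m] {a : K} (ha : a ≠ 0)
    (ham : a - Fintype.card m ≠ 0) :
    (a • (1 : Matrix m m K) - of fun _ _ => 1).det =
      a ^ (Fintype.card m - 1) * (a - Fintype.card m) := by
  have key := mul_det_add_all_ones_of_row_sum ham (A := a • (1 : Matrix m m K) - of fun _ _ => 1)
    fun i => by simp [Matrix.sub_apply, Matrix.smul_apply, Matrix.one_apply, sum_sub_distrib]
  rw [sub_add_cancel, sub_add_cancel, det_smul, det_one, mul_one] at key
  obtain ⟨k, hk⟩ := Nat.exists_eq_add_one.mpr (Fintype.card_pos (α := m))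
  rw [hk, pow_succ] at key
  rw [hk, Nat.add_sub_cancel]
  apply mul_left_cancel₀ ha
  linear_combination -key

variable {ι : Type*} [Fintype ι] [DecidableEq ι]

theorem det_diagonal_sub_fiber_ones {f : m → ι} (hf : Function.Surjective f) {d : ι → K}
    (hd : ∀ i, d i ≠ 0) (hdf : ∀ i, d i - #{a | f a = i} ≠ 0) :
    (diagonal (fun a => d (f a)) - of fun a b => if f a = f b then 1 else 0).det =
      ∏ i, d i ^ (#{a | f a = i} - 1) * (d i - #{a | f a = i}) := by
  -- `BlockTriangular.det` wants a linear order on the blocks; any one will do.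
  let _ : LinearOrder ι := LinearOrder.lift' _ (Fintype.equivFin ι).injective
  have hblock : (diagonal (fun a => d (f a)) -
      of fun a b => if f a = f b then (1 : K) else 0).BlockTriangular f := by
    intro a b hab
    have hne : a ≠ b := fun h => hab.ne (by rw [h])
    simp [hne, hab.ne']
  rw [hblock.det, image_univ_of_surjective hf]
  refine prod_congr rfl fun i _ => ?_
  have : Nonempty {a // f a = i} := nonempty_subtype.mpr (hf i)
  rw [← Fintype.card_subtype,
    ← det_smul_one_sub_all_ones (hd i) (by rw [Fintype.card_subtype]; exact hdf i)]
  congr 1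
  ext ⟨a, ha⟩ ⟨b, hb⟩
  simp [toSquareBlock_def, diagonal_apply, Matrix.one_apply, ha, hb]

end Matrix

namespace SimpleGraph

theorem Iso.charpoly_lapMatrix_eq {V W R : Type*} [Fintype V] [DecidableEq V] [Fintype W]
    [DecidableEq W] [CommRing R] {G : SimpleGraph V} {H : SimpleGraph W} [DecidableRel G.Adj]
    [DecidableRel H.Adj] (φ : G ≃g H) :
    (G.lapMatrix R).charpoly = (H.lapMatrix R).charpoly := by
  have hreindex : reindex φ.toEquiv.symm φ.toEquiv.symm (H.lapMatrix R) = G.lapMatrix R := by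
    ext u v
    simp [lapMatrix, degMatrix, diagonal_apply, φ.injective.eq_iff, φ.map_adj_iff]
  rw [← hreindex, charpoly_reindex]

/- A graph `G` with `G.Adj u v ↔ f u ≠ f v` is the complete multipartite graph whose parts are
the fibres of `f`. -/
variable {V ι K : Type*} [Fintype V] [DecidableEq ι] {f : V → ι} {G : SimpleGraph V}
  [DecidableRel G.Adj]

theorem degree_eq_card_sub_card_fiber (hG : ∀ u v, G.Adj u v ↔ f u ≠ f v) (v : V) :
    G.degree v = Fintype.card V - #{w | f w = f v} := by
  have hsplit := card_filter_add_card_filter_not (s := univ) (fun w => f w = f v)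
  have hneighbors : G.neighborFinset v = ({w | ¬f w = f v} : Finset V) := by
    ext w
    simp [hG, eq_comm]
  rw [← card_neighborFinset_eq_degree, hneighbors, ← card_univ]
  omega

variable [DecidableEq V] [Field K]

theorem scalar_sub_lapMatrix_eq (hG : ∀ u v, G.Adj u v ↔ f u ≠ f v) (t : K) :
    scalar V t - G.lapMatrix K =
      (diagonal (fun v => t - Fintype.card V + #{w | f w = f v}) -
        of fun u v => if f u = f v then 1 else 0) + of fun _ _ => 1 := by
  ext u v
  by_cases huv : u = v
  · subst huv
    have hle : #{w | f w = f u} ≤ Fintype.card V := card_filter_le _ _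
    simp [lapMatrix, degMatrix, degree_eq_card_sub_card_fiber hG, Nat.cast_sub hle]
    ring
  · by_cases hf : f u = f v <;> simp [lapMatrix, degMatrix, huv, hf, hG]

variable [Fintype ι]

theorem det_scalar_sub_lapMatrix [Nonempty ι] (hf : Function.Surjective f)
    (hG : ∀ u v, G.Adj u v ↔ f u ≠ f v) {t : K} (htV : t ≠ Fintype.card V)
    (hti : ∀ i, (Fintype.card V : K) - #{v | f v = i} ≠ t) :
    (scalar V t - G.lapMatrix K).det =
      t * (t - Fintype.card V) ^ (Fintype.card ι - 1) *
        ∏ i, (t - (Fintype.card V - #{v | f v = i})) ^ (#{v | f v = i} - 1) := by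
  rw [scalar_sub_lapMatrix_eq hG]
  set N : K := (Fintype.card V : K)
  have hs : t - N ≠ 0 := sub_ne_zero.mpr htV
  have hd : ∀ i, t - N + #{v | f v = i} ≠ 0 := fun i h => hti i (by linear_combination -h)
  have hrow : ∀ u, ∑ v, (diagonal (fun v => t - N + #{w | f w = f v}) -
      of fun u v => if f u = f v then (1 : K) else 0) u v = t - N := by
    intro u
    simp [sum_sub_distrib, diagonal_apply, eq_comm]
  have key := mul_det_add_all_ones_of_row_sum hs hrow
  rw [det_diagonal_sub_fiber_ones hf hd (fun i => by simpa using hs)] at key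
  have hpow : (t - N) * (t - N) ^ (Fintype.card ι - 1) = (t - N) ^ Fintype.card ι := by
    rw [← pow_succ', Nat.sub_add_cancel Fintype.card_pos]
  have hshift : ∀ i, t - (N - #{v | f v = i}) = t - N + #{v | f v = i} := fun i => by ring
  apply mul_left_cancel₀ hs
  simp only [key, hshift, add_sub_cancel_right, prod_mul_distrib, prod_const, card_univ, ← hpow]
  ring

theorem charpoly_lapMatrix_eq [Infinite K] [Nonempty ι] (hf : Function.Surjective f)
    (hG : ∀ u v, G.Adj u v ↔ f u ≠ f v) :
    (G.lapMatrix K).charpoly =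
      X * (X - C (Fintype.card V : K)) ^ (Fintype.card ι - 1) *
        ∏ i, (X - C ((Fintype.card V : K) - #{v | f v = i})) ^ (#{v | f v = i} - 1) := by
  apply eq_of_infinite_eval_eq
  apply (((Set.finite_range fun i => (Fintype.card V : K) - #{v | f v = i}).insert
    (Fintype.card V : K)).infinite_compl).mono
  intro t ht
  simp only [Set.mem_compl_iff, Set.mem_insert_iff, Set.mem_range, not_or, not_exists] at ht
  simp only [Set.mem_ofPred_eq, eval_charpoly, det_scalar_sub_lapMatrix hf hG ht.1 ht.2, eval_mul,
    eval_pow, eval_sub, eval_X, eval_C, eval_prod]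

end SimpleGraph

def MulEquiv.nonCommGraphIso {G H : Type*} [Group G] [Group H] (e : G ≃* H) :
    nonCommGraph G ≃g nonCommGraph H where
  toEquiv := e.toEquiv.subtypeEquiv fun x =>
    (MulEquivClass.apply_mem_center_iff e (x := x)).symm.not
  map_rel_iff' {x y} := not_congr ⟨fun h => by simpa using h.map e.symm, fun h => h.map e⟩

theorem ncCharpoly_eq_charpoly_lapMatrix {G : Type*} [Group G] [Fintype G]
    [Fintype {x : G // x ∉ Subgroup.center G}] [DecidableEq {x : G // x ∉ Subgroup.center G}]
    [DecidableRel (nonCommGraph G).Adj] :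
    ncCharpoly G = ((nonCommGraph G).lapMatrix ℝ).charpoly := by
  unfold ncCharpoly ncLap
  convert rfl

theorem ncCharpoly_congr {G H : Type*} [Group G] [Fintype G] [Group H] [Fintype H] (e : G ≃* H) :
    ncCharpoly G = ncCharpoly H := by
  classical
  rw [ncCharpoly_eq_charpoly_lapMatrix, ncCharpoly_eq_charpoly_lapMatrix]
  exact e.nonCommGraphIso.charpoly_lapMatrix_eq

namespace ZMod

variable {n : ℕ}

theorem castHom_eq_zero_iff_add_self_eq_zero (d : ZMod (2 * n)) :
    castHom (dvd_mul_left n 2) (ZMod n) d = 0 ↔ d + d = 0 := by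
  obtain ⟨m, rfl⟩ := intCast_surjective d
  rw [map_intCast, ← Int.cast_add, intCast_zmod_eq_zero_iff_dvd, intCast_zmod_eq_zero_iff_dvd,
    ← two_mul, Nat.cast_mul, Nat.cast_two, mul_dvd_mul_iff_left two_ne_zero]

theorem card_fiber_castHom_two_mul [NeZero n] (k : ZMod n) :
    #{d : ZMod (2 * n) | castHom (dvd_mul_left n 2) (ZMod n) d = k} = 2 := by
  have hsurj := castHom_surjective (dvd_mul_left n 2)
  have hfiber : ∀ j, #{d : ZMod (2 * n) | castHom (dvd_mul_left n 2) (ZMod n) d = j} =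
      #{d : ZMod (2 * n) | castHom (dvd_mul_left n 2) (ZMod n) d = k} := fun j =>
    AddMonoidHom.card_fiber_eq_of_mem_range _ (hsurj j) (hsurj k)
  have htotal := card_eq_sum_card_fiberwise (f := castHom (dvd_mul_left n 2) (ZMod n))
    (s := univ) (t := univ) fun _ _ => mem_univ _
  rw [sum_congr rfl fun j _ => hfiber j, sum_const, card_univ, card_univ, ZMod.card, ZMod.card,
    smul_eq_mul] at htotal
  exact Nat.eq_of_mul_eq_mul_left (NeZero.pos n) (by linarith)

end ZMod

namespace QuaternionGroup

variable {n : ℕ}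

theorem commute_a_xa_iff (i j : ZMod (2 * n)) : Commute (a i) (xa j) ↔ i + i = 0 := by
  rw [Commute, SemiconjBy, a_mul_xa, xa_mul_a, xa.injEq]
  constructor <;> intro h <;> linear_combination -h

theorem commute_xa_xa_iff (i j : ZMod (2 * n)) :
    Commute (xa i) (xa j) ↔ (j - i) + (j - i) = 0 := by
  rw [Commute, SemiconjBy, xa_mul_xa, xa_mul_xa, a.injEq]
  constructor <;> intro h <;> linear_combination h

theorem a_mem_center_iff {i : ZMod (2 * n)} :
    a i ∈ Subgroup.center (QuaternionGroup n) ↔ i + i = 0 := by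
  rw [Subgroup.mem_center_iff]
  refine ⟨fun h => (commute_a_xa_iff i 0).mp (h (xa 0)).symm, fun h g => ?_⟩
  rcases g with j | j
  · rw [a_mul_a, a_mul_a, add_comm]
  · exact ((commute_a_xa_iff i j).mpr h).symm.eq

theorem xa_notMem_center (hn : n ≠ 1) (i : ZMod (2 * n)) :
    xa i ∉ Subgroup.center (QuaternionGroup n) := by
  intro h
  have := (commute_a_xa_iff 1 i).mp (Subgroup.mem_center_iff.mp h (a 1))
  rw [← ZMod.castHom_eq_zero_iff_add_self_eq_zero, map_one, ZMod.one_eq_zero_iff] at this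
  exact hn this

/- The non-central elements fall into the commuting classes `{a i | i ∉ {0, n}}` and
`{xa i, xa (i + n)}`; the latter are indexed by `i mod n`. -/
def commClass : QuaternionGroup n → Option (ZMod n)
  | a _ => none
  | xa i => some (ZMod.castHom (dvd_mul_left n 2) (ZMod n) i)

@[simp] theorem commClass_a (i : ZMod (2 * n)) : commClass (a i) = none := rfl

@[simp] theorem commClass_xa (i : ZMod (2 * n)) :
    commClass (xa i) = some (ZMod.castHom (dvd_mul_left n 2) (ZMod n) i) := rfl

theorem commute_iff_commClass_eq {g h : QuaternionGroup n} (hg : g ∉ Subgroup.center _)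
    (hh : h ∉ Subgroup.center _) : Commute g h ↔ commClass g = commClass h := by
  rcases g with i | i <;> rcases h with j | j
  · simp [Commute, SemiconjBy, a_mul_a, add_comm]
  · simpa [commute_a_xa_iff, a_mem_center_iff] using hg
  · simpa [Commute.symm_iff (a := xa i), commute_a_xa_iff, a_mem_center_iff] using hh
  · rw [commute_xa_xa_iff, ← ZMod.castHom_eq_zero_iff_add_self_eq_zero, map_sub, sub_eq_zero]
    simp [eq_comm]

theorem nonCommGraph_adj_iff (g h : {g : QuaternionGroup n // g ∉ Subgroup.center _}) :
    (nonCommGraph (QuaternionGroup n)).Adj g h ↔ commClass g.1 ≠ commClass h.1 :=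
  (commute_iff_commClass_eq g.2 h.2).not

theorem commClass_surjective (hn : n ≠ 1) :
    Function.Surjective fun g : {g : QuaternionGroup n // g ∉ Subgroup.center _} => commClass g.1
  | none => ⟨⟨a 1, by
      rwa [a_mem_center_iff, ← ZMod.castHom_eq_zero_iff_add_self_eq_zero, map_one,
        ZMod.one_eq_zero_iff]⟩, rfl⟩
  | some k => by
    obtain ⟨i, rfl⟩ := ZMod.castHom_surjective (dvd_mul_left n 2) k
    exact ⟨⟨xa i, xa_notMem_center hn i⟩, rfl⟩

variable [NeZero n] [Fintype {g : QuaternionGroup n // g ∉ Subgroup.center _}]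

theorem card_commClass_eq_none :
    #{g : {g : QuaternionGroup n // g ∉ Subgroup.center _} | commClass g.1 = none} =
      2 * n - 2 := by
  have hsplit := card_filter_add_card_filter_not (s := univ)
    (fun i : ZMod (2 * n) => ZMod.castHom (dvd_mul_left n 2) (ZMod n) i = 0)
  rw [ZMod.card_fiber_castHom_two_mul, card_univ, ZMod.card] at hsplit
  suffices #{g : {g : QuaternionGroup n // g ∉ Subgroup.center _} | commClass g.1 = none} =
      #{i : ZMod (2 * n) | ¬ZMod.castHom (dvd_mul_left n 2) (ZMod n) i = 0} by omega
  symm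
  refine card_bij (fun i hi => ⟨a i, ?_⟩) ?_ ?_ ?_
  · rw [a_mem_center_iff, ← ZMod.castHom_eq_zero_iff_add_self_eq_zero]
    exact (mem_filter.mp hi).2
  · simp only [mem_filter, mem_univ, true_and, commClass_a, implies_true]
  · simp
  · rintro ⟨g | g, hg⟩ h <;>
      simp only [mem_filter, mem_univ, true_and, commClass_a, commClass_xa] at h
    · refine ⟨g, mem_filter.mpr ⟨mem_univ _, ?_⟩, rfl⟩
      rwa [ZMod.castHom_eq_zero_iff_add_self_eq_zero, ← a_mem_center_iff]
    · simp at h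

theorem card_commClass_eq_some (hn : n ≠ 1) (k : ZMod n) :
    #{g : {g : QuaternionGroup n // g ∉ Subgroup.center _} | commClass g.1 = some k} = 2 := by
  rw [← ZMod.card_fiber_castHom_two_mul k]
  symm
  refine card_bij (fun i _ => ⟨xa i, xa_notMem_center hn i⟩) ?_ ?_ ?_
  · simp only [mem_filter, mem_univ, true_and, commClass_xa, Option.some.injEq, imp_self,
      implies_true]
  · simp
  · rintro ⟨g | g, hg⟩ h <;>
      simp only [mem_filter, mem_univ, true_and, commClass_a, commClass_xa] at h
    · simp at h
    · exact ⟨g, mem_filter.mpr ⟨mem_univ _, Option.some_injective _ h⟩, rfl⟩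

theorem card_nonCentral (hn : n ≠ 1) :
    Fintype.card {g : QuaternionGroup n // g ∉ Subgroup.center _} = 4 * n - 2 := by
  rw [← card_univ, card_eq_sum_card_fiberwise (f := fun g => commClass g.1) (t := univ)
    fun _ _ => mem_univ _, Fintype.sum_option, card_commClass_eq_none]
  simp only [card_commClass_eq_some hn, sum_const, card_univ, ZMod.card, smul_eq_mul]
  have := NeZero.pos n
  omega

end QuaternionGroup

/-- Laplacian spectrum of the non-commuting graph of the generalized
quaternion group `Q_{4n}` of order `4n`, `n ≥ 2`. -/
theorem laplacian_spectrum_nc_graph_generalized_quaternion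
    (n : ℕ) (hn : 2 ≤ n) (G : Type*) [Group G] [Fintype G]
    (h : Nonempty (G ≃* QuaternionGroup n)) :
    ncCharpoly G =
      X *
      (X - C (2 * (n : ℝ))) ^ (2 * n - 3) *
      (X - C (4 * (n : ℝ) - 4)) ^ n *
      (X - C (4 * (n : ℝ) - 2)) ^ n := by
  obtain ⟨e⟩ := h
  have : NeZero n := ⟨by omega⟩
  have hn1 : n ≠ 1 := by omega
  classical
  rw [ncCharpoly_congr e, ncCharpoly_eq_charpoly_lapMatrix,
    SimpleGraph.charpoly_lapMatrix_eq (QuaternionGroup.commClass_surjective hn1)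
      QuaternionGroup.nonCommGraph_adj_iff]
  simp only [Fintype.prod_option, QuaternionGroup.card_commClass_eq_none,
    QuaternionGroup.card_commClass_eq_some hn1, QuaternionGroup.card_nonCentral hn1,
    Fintype.card_option, ZMod.card, prod_const, card_univ, Nat.add_sub_cancel]
  rw [show 2 * n - 2 - 1 = 2 * n - 3 by omega]
  push_cast [Nat.cast_sub (show 2 ≤ 4 * n by omega), Nat.cast_sub (show 2 ≤ 2 * n by omega)]
  ring_nf
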